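/- arXiv:2112.14601 — 3 statements merged into one kernel-verified Lean document; each statement's English description precedes it below -/
import Mathlib

section
/- For any real number δ > 0 and any integer N ≥ 1, there exists ε = ε(δ, N) > 0 with the following property. For every Lipschitz function f : ℝ^N → ℝ satisfying sup_{[0,1]^N} f − inf_{[0,1]^N} f ≤ 2ε and every subset E ⊆ (0,1)^N of full Lebesgue measure in [0,1]^N, there exist N+1 sequences (τ^{j,k})_{k≥1} of points of E (for j = 1, …, N+1), a point τ^∞ ∈ (0,1)^N, and vectors v^1, …, v^{N+1} ∈ ℝ^N such that: (i) τ^{j,k} → τ^∞ as k → ∞ for every j; (ii) f is (Fréchet) differentiable at τ^{j,k} for every j and k; (iii) for every j, the gradients ∇f(τ^{j,k}) converge to v^j as k → ∞; and (iv) the convex hull of {v^1, …, v^{N+1}} contains a point v with ‖v‖ ≤ δ. -/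
/-!
Perturb `f` by `5ε‖x - m‖`, `m` the centre of the cube. Since `f` oscillates by at most `2ε` and
boundary points are at distance `1/2` from `m`, the perturbed function attains its minimum over the
cube at an interior point `τ₀`, and `f x ≥ f τ₀ - 5ε‖x - τ₀‖` on the cube.

Suppose that on some ball around `τ₀` the convex hull of the gradients taken at points of `E`
stayed at distance `≥ δ > 5ε` from the origin. Projecting the origin onto its closure gives a unit
vector `u` with `⟪u, ∇f⟫ ≥ δ` almost everywhere on the ball. By Fubini, `f` is differentiable at
almost every point of almost every line parallel to `u`, and the fundamental theorem of calculus
for Lipschitz functions gives `f (y - t u) ≤ f y - δ t` on those lines. Then continuity of `f` gives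
the same bound for `y = τ₀`, which contradicts the lower bound at `τ₀`.

So every ball around `τ₀` carries a convex combination of gradients of norm `< δ`. By
Carathéodory, `N + 1` gradients suffice, and compactness of the simplex and of the ball
`‖∇f‖ ≤ L` yields the convergent sequences.
-/

open Filter Topology MeasureTheory Set

theorem exists_fin_stdSimplex_of_mem_convexHull_image {𝕜 E α : Type*} [Field 𝕜] [LinearOrder 𝕜]
    [IsStrictOrderedRing 𝕜] [AddCommGroup E] [Module 𝕜 E] [FiniteDimensional 𝕜 E] {g : α → E}
    {S : Set α} {w : E} {n : ℕ} (hn : Module.finrank 𝕜 E ≤ n) (hw : w ∈ convexHull 𝕜 (g '' S)) :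
    ∃ q : Fin (n + 1) → α, ∃ wt ∈ stdSimplex 𝕜 (Fin (n + 1)),
      (∀ j, q j ∈ S) ∧ ∑ j, wt j • g (q j) = w := by
  obtain ⟨ι, _, z, c, hzS, hind, hc, hcsum, hcw⟩ := eq_pos_convex_span_of_mem_convexHull hw
  choose a haS hgz using fun i => hzS ⟨i, rfl⟩
  obtain ⟨i₀⟩ : Nonempty ι := by
    by_contra! h
    simp at hcsum
  obtain ⟨e⟩ : Nonempty (ι ↪ Fin (n + 1)) := Function.Embedding.nonempty_of_card_le <| by
    simpa using hind.card_le_finrank_succ.trans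
      (Nat.succ_le_succ ((Submodule.finrank_le _).trans hn))
  refine ⟨Function.extend e a fun _ => a i₀, Function.extend e c 0, ⟨fun j => ?_, ?_⟩,
    fun j => ?_, ?_⟩
  · by_cases hj : ∃ i, e i = j
    · obtain ⟨i, rfl⟩ := hj
      rw [e.injective.extend_apply]
      exact (hc i).le
    · rw [Function.extend_apply' _ _ _ hj, Pi.zero_apply]
  · rw [← hcsum]
    refine (Fintype.sum_of_injective e e.injective _ _ (fun j hj => ?_) (fun i => ?_)).symm
    · exact Function.extend_apply' _ _ _ hj
    · rw [e.injective.extend_apply]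
  · by_cases hj : ∃ i, e i = j
    · obtain ⟨i, rfl⟩ := hj
      rw [e.injective.extend_apply]
      exact haS i
    · rw [Function.extend_apply' _ _ _ hj]
      exact haS i₀
  · rw [← hcw]
    refine (Fintype.sum_of_injective e e.injective _ _ (fun j hj => ?_) (fun i => ?_)).symm
    · rw [Function.extend_apply' _ _ _ hj, Pi.zero_apply, zero_smul]
    · rw [e.injective.extend_apply, e.injective.extend_apply, hgz]

open scoped RealInnerProductSpace

theorem exists_norm_eq_one_le_inner_of_forall_le_norm {F : Type*} [NormedAddCommGroup F]
    [InnerProductSpace ℝ F] [CompleteSpace F] {G : Set F} (hG : G.Nonempty) {ρ : ℝ}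
    (hρ : 0 < ρ) (h : ∀ w ∈ convexHull ℝ G, ρ ≤ ‖w‖) :
    ∃ u : F, ‖u‖ = 1 ∧ ∀ g ∈ G, ρ ≤ ⟪u, g⟫ := by
  have hconv : Convex ℝ (closure (convexHull ℝ G)) := (convex_convexHull ℝ G).closure
  obtain ⟨p, hpC, hpmin⟩ := exists_norm_eq_iInf_of_complete_convex
    hG.convexHull.closure isClosed_closure.isComplete hconv 0
  have hproj := (norm_eq_iInf_iff_real_inner_le_zero hconv hpC).1 hpmin
  have hρp : ρ ≤ ‖p‖ :=
    closure_minimal h (isClosed_le continuous_const continuous_norm) hpC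
  have hp : 0 < ‖p‖ := hρ.trans_le hρp
  refine ⟨‖p‖⁻¹ • p, norm_smul_inv_norm (norm_pos_iff.1 hp), fun g hg => ?_⟩
  have hpg := hproj g (subset_closure (subset_convexHull ℝ G hg))
  rw [zero_sub, inner_neg_left, inner_sub_right, real_inner_self_eq_norm_sq] at hpg
  rw [real_inner_smul_left, le_inv_mul_iff₀ hp]
  nlinarith

theorem AbsolutelyContinuousOnInterval.sub_le_mul_of_ae_deriv_le {ψ : ℝ → ℝ} {a b C : ℝ}
    (hψ : AbsolutelyContinuousOnInterval ψ a b) (hab : a ≤ b)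
    (hderiv : ∀ᵐ t, t ∈ Icc a b → deriv ψ t ≤ C) :
    ψ b - ψ a ≤ C * (b - a) := by
  rw [← hψ.integral_deriv_eq_sub]
  calc ∫ t in a..b, deriv ψ t ≤ ∫ _ in a..b, C :=
        intervalIntegral.integral_mono_ae_restrict hab hψ.intervalIntegrable_deriv
          intervalIntegrable_const ((ae_restrict_iff' measurableSet_Icc).2 hderiv)
    _ = C * (b - a) := by rw [intervalIntegral.integral_const, smul_eq_mul, mul_comm]

section Lines

variable {E : Type*} [NormedAddCommGroup E] [NormedSpace ℝ E]

theorem LipschitzWith.add_smul_sub_le_of_ae_fderiv_le {f : E → ℝ} {K : NNReal}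
    (hf : LipschitzWith K f) {x h : E} {t C : ℝ} (ht : 0 ≤ t)
    (hder : ∀ᵐ s, s ∈ Icc 0 t →
      DifferentiableAt ℝ f (x + s • h) ∧ fderiv ℝ f (x + s • h) h ≤ C) :
    f (x + t • h) - f x ≤ C * t := by
  have hline : LipschitzWith _ fun s : ℝ => f (x + s • h) :=
    hf.comp ((LipschitzWith.const x).add (ContinuousLinearMap.toSpanSingleton ℝ h).lipschitz)
  have hderiv : ∀ᵐ s, s ∈ Icc 0 t → deriv (fun s : ℝ => f (x + s • h)) s ≤ C := by
    filter_upwards [hder] with s hs hst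
    obtain ⟨hdiff, hle⟩ := hs hst
    have : HasDerivAt (fun s : ℝ => x + s • h) h s := by
      simpa using ((hasDerivAt_id s).smul_const h).const_add x
    exact (hdiff.hasFDerivAt.comp_hasDerivAt s this).deriv.trans_le hle
  simpa using
    hline.lipschitzOnWith.absolutelyContinuousOnInterval.sub_le_mul_of_ae_deriv_le ht hderiv

variable [FiniteDimensional ℝ E] [MeasurableSpace E] [BorelSpace E]

theorem MeasureTheory.ae_ae_add_smul {μ : Measure E} [μ.IsAddRightInvariant] [SFinite μ]
    {p : E → Prop} (hp : ∀ᵐ z ∂μ, p z) (h : E) :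
    ∀ᵐ y ∂μ, ∀ᵐ s : ℝ, p (y + s • h) := by
  set N := toMeasurable μ {z | ¬p z}
  have hN : μ N = 0 := by rwa [measure_toMeasurable, ← ae_iff]
  have hS : MeasurableSet {q : E × ℝ | q.1 + q.2 • h ∈ N} :=
    measurableSet_preimage (by fun_prop) (measurableSet_toMeasurable _ _)
  have hprod : ∀ᵐ q ∂μ.prod (volume : Measure ℝ), q.1 + q.2 • h ∉ N := by
    rw [ae_iff]
    simp only [not_not]
    rw [Measure.prod_apply_symm hS]
    have hslice (s : ℝ) : (fun y => (y, s)) ⁻¹' {q : E × ℝ | q.1 + q.2 • h ∈ N} = (· + s • h) ⁻¹' N :=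
      rfl
    simp [hslice, measure_preimage_add_right, hN]
  filter_upwards [Measure.ae_ae_of_ae_prod hprod] with y hy
  filter_upwards [hy] with s hs
  by_contra hps
  exact hs (subset_toMeasurable _ _ hps)

theorem LipschitzWith.add_smul_sub_le_of_ae_fderiv_le_on (μ : Measure E) [μ.IsAddHaarMeasure]
    {f : E → ℝ} {K : NNReal} (hf : LipschitzWith K f) {U : Set E} (hU : IsOpen U) {x h : E}
    {t C : ℝ} (ht : 0 ≤ t) (hseg : ∀ s ∈ Icc 0 t, x + s • h ∈ U)
    (hder : ∀ᵐ z ∂μ, z ∈ U → fderiv ℝ f z h ≤ C) :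
    f (x + t • h) - f x ≤ C * t := by
  have hlines := ae_ae_add_smul (hder.and hf.ae_differentiableAt) h
  have hnear : ∀ᶠ y in 𝓝 x, ∀ s ∈ Icc 0 t, y + s • h ∈ U :=
    isCompact_Icc.eventually_forall_of_forall_eventually fun s hs =>
      (Continuous.tendsto (by fun_prop) (x, s)).eventually (hU.mem_nhds (hseg s hs))
  have hclosed : IsClosed {y | f (y + t • h) - f y ≤ C * t} :=
    isClosed_le (by have := hf.continuous; fun_prop) continuous_const
  refine hclosed.closure_subset (mem_closure_iff_frequently.2 ?_)
  have hfreq := mem_closure_iff_frequently.1 (Measure.dense_of_ae hlines x)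
  refine (hfreq.and_eventually hnear).mono fun y ⟨hy, hyU⟩ => ?_
  refine hf.add_smul_sub_le_of_ae_fderiv_le ht ?_
  filter_upwards [hy] with s ⟨hle, hdiff⟩ hs
  exact ⟨hdiff, hle (hyU s hs)⟩

end Lines

section Gradient

variable {F : Type*} [NormedAddCommGroup F] [InnerProductSpace ℝ F] [FiniteDimensional ℝ F]
  [MeasurableSpace F] [BorelSpace F]

theorem LipschitzWith.exists_mem_convexHull_gradient_norm_lt (μ : Measure F)
    [μ.IsAddHaarMeasure] {f : F → ℝ} {K : NNReal} (hf : LipschitzWith K f) {D : Set F}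
    {x₀ : F} {r c ρ : ℝ} (hr : 0 < r) (hρ : 0 < ρ) (hcρ : c < ρ)
    (hD : ∀ᵐ z ∂μ, z ∈ Metric.ball x₀ r → z ∈ D)
    (hmin : ∀ x ∈ Metric.ball x₀ r, f x₀ - c * dist x x₀ ≤ f x) :
    ∃ w ∈ convexHull ℝ (gradient f '' (D ∩ Metric.ball x₀ r)), ‖w‖ < ρ := by
  by_contra! hfar
  obtain ⟨z, hzD, hz⟩ := ((mem_closure_iff_frequently.1 (Measure.dense_of_ae hD x₀)).and_eventually
    (Metric.ball_mem_nhds x₀ hr)).exists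
  have hne : (D ∩ Metric.ball x₀ r).Nonempty := ⟨z, hzD hz, hz⟩
  obtain ⟨u, hu1, hu⟩ := exists_norm_eq_one_le_inner_of_forall_le_norm (hne.image _) hρ hfar
  have hder : ∀ᵐ z ∂μ, z ∈ Metric.ball x₀ r → fderiv ℝ f z (-u) ≤ -ρ := by
    filter_upwards [hD] with z hzD hz
    rw [map_neg, ← toDual_gradient, InnerProductSpace.toDual_apply_apply, real_inner_comm,
      neg_le_neg_iff]
    exact hu _ ⟨z, ⟨hzD hz, hz⟩, rfl⟩
  have hdist : ∀ s, 0 ≤ s → dist (x₀ + s • -u) x₀ = s := fun s hs => by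
    rw [dist_eq_norm, add_sub_cancel_left, norm_smul, norm_neg, hu1, mul_one,
      Real.norm_of_nonneg hs]
  have hseg : ∀ s ∈ Icc 0 (r / 2), x₀ + s • -u ∈ Metric.ball x₀ r := fun s hs => by
    rw [Metric.mem_ball, hdist s hs.1]
    linarith [hs.2]
  have hdec := hf.add_smul_sub_le_of_ae_fderiv_le_on μ Metric.isOpen_ball (half_pos hr).le
    hseg hder
  have hlow := hmin _ (hseg _ ⟨(half_pos hr).le, le_rfl⟩)
  rw [hdist _ (half_pos hr).le] at hlow
  nlinarith

theorem LipschitzWith.exists_tendsto_gradient_convexHull_norm_le (μ : Measure F)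
    [μ.IsAddHaarMeasure] {f : F → ℝ} {K : NNReal} (hf : LipschitzWith K f) {D : Set F}
    {x₀ : F} {r c ρ : ℝ} {n : ℕ} (hn : Module.finrank ℝ F ≤ n) (hr : 0 < r) (hρ : 0 < ρ)
    (hcρ : c < ρ) (hD : ∀ᵐ z ∂μ, z ∈ Metric.ball x₀ r → z ∈ D)
    (hmin : ∀ x ∈ Metric.ball x₀ r, f x₀ - c * dist x x₀ ≤ f x) :
    ∃ (τ : Fin (n + 1) → ℕ → F) (v : Fin (n + 1) → F),
      (∀ j k, τ j k ∈ D) ∧ (∀ j, Tendsto (τ j) atTop (𝓝 x₀)) ∧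
      (∀ j, Tendsto (fun k => gradient f (τ j k)) atTop (𝓝 (v j))) ∧
      ∃ w ∈ convexHull ℝ (range v), ‖w‖ ≤ ρ := by
  have hstep (k : ℕ) : ∃ q : Fin (n + 1) → F, ∃ wt ∈ stdSimplex ℝ (Fin (n + 1)),
      (∀ j, q j ∈ D ∩ Metric.ball x₀ (r / (k + 1))) ∧
      ‖∑ j, wt j • gradient f (q j)‖ < ρ := by
    have hsub : Metric.ball x₀ (r / (k + 1)) ⊆ Metric.ball x₀ r :=
      Metric.ball_subset_ball (div_le_self hr.le (by linarith [k.cast_nonneg (α := ℝ)]))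
    obtain ⟨w, hw, hwρ⟩ := hf.exists_mem_convexHull_gradient_norm_lt μ (by positivity) hρ hcρ
      (hD.mono fun z hz hzk => hz (hsub hzk)) fun x hx => hmin x (hsub hx)
    obtain ⟨q, wt, hwt, hq, rfl⟩ := exists_fin_stdSimplex_of_mem_convexHull_image hn hw
    exact ⟨q, wt, hwt, hq, hwρ⟩
  choose q wt hwt hq hqρ using hstep
  have hq_tendsto (j : Fin (n + 1)) : Tendsto (fun k => q k j) atTop (𝓝 x₀) := by
    have hrad : Tendsto (fun k : ℕ => r / (k + 1)) atTop (𝓝 0) := by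
      simpa [Function.comp_def] using
        (tendsto_const_div_atTop_nhds_zero_nat r).comp (tendsto_add_atTop_nat 1)
    exact tendsto_iff_dist_tendsto_zero.2 <|
      squeeze_zero (fun _ => dist_nonneg) (fun k => (hq k j).2.le) hrad
  have hgrad (z : F) : ‖gradient f z‖ ≤ K := by
    rw [← (InnerProductSpace.toDual ℝ F).norm_map, toDual_gradient]
    exact norm_fderiv_le_of_lipschitz ℝ hf
  have hcompact : IsCompact (stdSimplex ℝ (Fin (n + 1)) ×ˢ
      univ.pi fun _ : Fin (n + 1) => Metric.closedBall (0 : F) K) :=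
    (isCompact_stdSimplex _ _).prod (isCompact_univ_pi fun _ => isCompact_closedBall _ _)
  obtain ⟨⟨a, v⟩, ⟨ha, -⟩, φ, hφ, hlim⟩ := hcompact.tendsto_subseq
    (x := fun k => (wt k, fun j => gradient f (q k j)))
    fun k => ⟨hwt k, fun j _ => mem_closedBall_zero_iff.2 (hgrad _)⟩
  refine ⟨fun j k => q (φ k) j, v, fun j k => (hq (φ k) j).1,
    fun j => (hq_tendsto j).comp hφ.tendsto_atTop, fun j => tendsto_pi_nhds.1 hlim.snd_nhds j,
    ∑ j, a j • v j, ?_, ?_⟩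
  · exact (convex_convexHull ℝ _).sum_mem (fun j _ => ha.1 j) ha.2
      fun j _ => subset_convexHull ℝ _ (mem_range_self j)
  · have hcont : Continuous fun p : (Fin (n + 1) → ℝ) × (Fin (n + 1) → F) =>
        ‖∑ j, p.1 j • p.2 j‖ := by fun_prop
    exact le_of_tendsto' ((hcont.tendsto _).comp hlim) fun k => (hqρ (φ k)).le

end Gradient

theorem IsCompact.exists_mem_forall_sub_mul_dist_le {X : Type*} [PseudoMetricSpace X]
    {K U : Set X} (hK : IsCompact K) {f : X → ℝ} (hf : ContinuousOn f K) {x₀ : X} (hx₀ : x₀ ∈ K)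
    {a R c : ℝ} (hc : 0 ≤ c) (hosc : ∀ x ∈ K, f x₀ - f x ≤ a)
    (hfar : ∀ x ∈ K \ U, R ≤ dist x x₀) (haR : a < c * R) :
    ∃ τ ∈ K ∩ U, ∀ x ∈ K, f τ - c * dist x τ ≤ f x := by
  obtain ⟨τ, hτK, hτmin⟩ := hK.exists_isMinOn ⟨x₀, hx₀⟩
    (hf.add (continuous_const.mul (continuous_id.dist continuous_const)).continuousOn)
  have hmin : ∀ x ∈ K, f τ + c * dist τ x₀ ≤ f x + c * dist x x₀ := fun x hx => hτmin hx
  refine ⟨τ, ⟨hτK, ?_⟩, fun x hx => ?_⟩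
  · by_contra hτU
    have hτx₀ := hmin x₀ hx₀
    rw [dist_self, mul_zero, add_zero] at hτx₀
    have := mul_le_mul_of_nonneg_left (hfar τ ⟨hτK, hτU⟩) hc
    linarith [hosc τ hτK]
  · have := hmin x hx
    have := mul_le_mul_of_nonneg_left (dist_triangle x τ x₀) hc
    rw [mul_add] at this
    linarith

namespace EuclideanSpace

variable {ι : Type*}

theorem isCompact_setOf_forall_mem_Icc (a b : ℝ) :
    IsCompact {x : EuclideanSpace ℝ ι | ∀ i, x i ∈ Icc a b} := by
  convert (EuclideanSpace.equiv ι ℝ).toHomeomorph.isCompact_preimage.2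
    (isCompact_univ_pi fun _ => isCompact_Icc (a := a) (b := b)) using 1
  ext
  simp [Pi.le_def, forall_and]

theorem isOpen_setOf_forall_mem_Ioo [Fintype ι] (a b : ℝ) :
    IsOpen {x : EuclideanSpace ℝ ι | ∀ i, x i ∈ Ioo a b} := by
  convert (isOpen_set_pi finite_univ fun _ _ => isOpen_Ioo (a := a) (b := b)).preimage
    (EuclideanSpace.equiv ι ℝ).continuous using 1
  ext
  simp

theorem le_dist_midpoint_of_not_forall_mem_Ioo [Fintype ι] {a b : ℝ} {x : EuclideanSpace ℝ ι}
    (hx : ¬∀ i, x i ∈ Ioo a b) :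
    (b - a) / 2 ≤ dist x (WithLp.toLp 2 fun _ => (a + b) / 2) := by
  obtain ⟨i, hi⟩ := not_forall.1 hx
  refine le_trans ?_ (PiLp.dist_apply_le _ _ i)
  rw [Real.dist_eq, PiLp.toLp_apply, le_abs']
  by_cases ha : a < x i
  · exact Or.inr (by linarith [not_lt.1 fun hb => hi ⟨ha, hb⟩])
  · exact Or.inl (by linarith [not_lt.1 ha])

end EuclideanSpace

/-- Technical lemma of Marques–Neves–Song (Lemma 3.4): for any `δ > 0` and `N ≥ 1`
there is `ε > 0` such that any Lipschitz function on `ℝ^N` with oscillation at most `2ε`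
on the unit cube, and any full-measure subset `E` of the open cube, admits `N+1`
sequences in `E` converging to a common point of the open cube, at which `f` is
differentiable, whose gradients converge to vectors whose convex hull comes
`δ`-close to the origin. -/
theorem stmt_0 :
    ∀ δ : ℝ, 0 < δ → ∀ N : ℕ, 1 ≤ N →
    ∃ ε : ℝ, 0 < ε ∧
      ∀ (f : EuclideanSpace ℝ (Fin N) → ℝ) (L : NNReal), LipschitzWith L f →
        sSup (f '' {x | ∀ i, x i ∈ Icc (0:ℝ) 1}) -
            sInf (f '' {x | ∀ i, x i ∈ Icc (0:ℝ) 1}) ≤ 2 * ε →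
        ∀ E : Set (EuclideanSpace ℝ (Fin N)),
          E ⊆ {x | ∀ i, x i ∈ Ioo (0:ℝ) 1} →
          volume ({x : EuclideanSpace ℝ (Fin N) | ∀ i, x i ∈ Icc (0:ℝ) 1} \ E) = 0 →
          ∃ (τ : Fin (N + 1) → ℕ → EuclideanSpace ℝ (Fin N))
            (τinf : EuclideanSpace ℝ (Fin N))
            (v : Fin (N + 1) → EuclideanSpace ℝ (Fin N)),
            (∀ j k, τ j k ∈ E) ∧
            (∀ i, τinf i ∈ Ioo (0:ℝ) 1) ∧
            (∀ j, Tendsto (τ j) atTop (𝓝 τinf)) ∧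
            (∀ j k, DifferentiableAt ℝ f (τ j k)) ∧
            (∀ j, Tendsto (fun k => gradient f (τ j k)) atTop (𝓝 (v j))) ∧
            ∃ w ∈ convexHull ℝ (Set.range v), ‖w‖ ≤ δ := by
  intro δ hδ N _
  -- the perturbation slope `5ε` has to exceed `4ε` (interior minimiser) and stay below `δ`
  refine ⟨δ / 6, by positivity, fun f L hf hosc E _ hE => ?_⟩
  set Q := {x : EuclideanSpace ℝ (Fin N) | ∀ i, x i ∈ Icc (0:ℝ) 1}
  set O := {x : EuclideanSpace ℝ (Fin N) | ∀ i, x i ∈ Ioo (0:ℝ) 1}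
  have hQ : IsCompact Q := EuclideanSpace.isCompact_setOf_forall_mem_Icc 0 1
  have hOQ : O ⊆ Q := fun x hx i => Ioo_subset_Icc_self (hx i)
  set m : EuclideanSpace ℝ (Fin N) := WithLp.toLp 2 fun _ => (0 + 1) / 2
  have hm : m ∈ Q := fun i => by norm_num [m]
  have hosc' : ∀ x ∈ Q, f m - f x ≤ 2 * (δ / 6) := fun x hx => by
    have := le_csSup (hQ.image hf.continuous).bddAbove (mem_image_of_mem f hm)
    have := csInf_le (hQ.image hf.continuous).bddBelow (mem_image_of_mem f hx)
    linarith
  obtain ⟨τ₀, ⟨-, hτ₀⟩, hmin⟩ := hQ.exists_mem_forall_sub_mul_dist_le hf.continuous.continuousOn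
    hm (c := 5 * (δ / 6)) (by positivity) hosc'
    (fun x hx => EuclideanSpace.le_dist_midpoint_of_not_forall_mem_Ioo hx.2) (by linarith)
  obtain ⟨r, hr, hball⟩ :=
    Metric.isOpen_iff.1 (EuclideanSpace.isOpen_setOf_forall_mem_Ioo 0 1) τ₀ hτ₀
  have hD : ∀ᵐ z, z ∈ Metric.ball τ₀ r → z ∈ E ∩ {z | DifferentiableAt ℝ f z} := by
    filter_upwards [measure_eq_zero_iff_ae_notMem.1 hE, hf.ae_differentiableAt] with z hzE hzf hz
    exact ⟨by_contra fun h => hzE ⟨hOQ (hball hz), h⟩, hzf⟩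
  obtain ⟨τ, v, hτ, hτlim, hv, hw⟩ := hf.exists_tendsto_gradient_convexHull_norm_le volume
    (n := N) (by simp) hr hδ (by linarith) hD fun x hx => hmin x (hOQ (hball hx))
  exact ⟨τ, τ₀, v, fun j k => (hτ j k).1, hτ₀, hτlim, fun j k => (hτ j k).2, hv, hw⟩
end

section
/- Let X be a compact metrizable topological space, φ : X → X a continuous map, and μ a Borel probability measure on X. For a point x ∈ X and an integer d ≥ 1 with φ^d(x) = x, write S_{x,d}(f) = Σ_{i=0}^{d−1} f(φ^i(x)) for f : X → ℝ. Suppose there is a sequence of 'orbit sets': for each N ≥ 1, an integer k_N ≥ 1, points x_{N,1}, …, x_{N,k_N} ∈ X, integers d_{N,1}, …, d_{N,k_N} ≥ 1 with φ^{d_{N,j}}(x_{N,j}) = x_{N,j} for all j, and positive real weights a_{N,1}, …, a_{N,k_N}, such that for every continuous f : X → ℝ, (Σ_{j=1}^{k_N} a_{N,j} · S_{x_{N,j}, d_{N,j}}(f)) / (Σ_{j=1}^{k_N} a_{N,j} · d_{N,j}) → ∫_X f dμ as N → ∞. Then there exist points y_1, y_2, … ∈ X and integers e_1, e_2, … ≥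 1 with φ^{e_M}(y_M) = y_M for every M, such that for every continuous f : X → ℝ, (Σ_{M=1}^{N} S_{y_M, e_M}(f)) / (Σ_{M=1}^{N} e_M) → ∫_X f dμ as N → ∞. -/
/-!
Rounding the weights `a N j` up to integer multiples turns the `N`-th orbit set into a finite list
of genuine periodic orbits whose average is still close to `∫ f dμ`; the error is one extra copy of
each orbit, negligible once the weights are scaled by a factor growing with `N`. The sequence is
the concatenation of these lists, each repeated so often that a single list is negligible against
everything before it. Along list boundaries the averages then converge by Stolz–Cesàro, and a
partial list cannot move them much.
-/

open Filter Topology Finset Asymptotics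

section Blocks

variable (ℓ : ℕ → ℕ)

def blockStart (t : ℕ) : ℕ := ∑ u ∈ range t, ℓ u

-- Capping the search at `M` loses nothing when all blocks are nonempty: then `t ≤ blockStart ℓ t`.
def blockIdx (M : ℕ) : ℕ := Nat.findGreatest (fun t => blockStart ℓ t ≤ M) M

def blockSum {β : Type*} [AddCommMonoid β] (F : ℕ → β) (u : ℕ) : β :=
  ∑ q ∈ range (ℓ u), F (blockStart ℓ u + q)

lemma blockStart_succ (t : ℕ) : blockStart ℓ (t + 1) = blockStart ℓ t + ℓ t :=
  sum_range_succ ℓ t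

lemma blockStart_mono : Monotone (blockStart ℓ) :=
  fun _ _ h => sum_le_sum_of_subset (range_subset_range.2 h)

lemma sum_range_blockStart {β : Type*} [AddCommMonoid β] (F : ℕ → β) (t : ℕ) :
    ∑ M ∈ range (blockStart ℓ t), F M = ∑ u ∈ range t, blockSum ℓ F u := by
  induction t with
  | zero => rfl
  | succ t ih => rw [blockStart_succ, sum_range_add, ih, sum_range_succ, blockSum]

lemma blockStart_blockIdx_le (M : ℕ) : blockStart ℓ (blockIdx ℓ M) ≤ M :=
  Nat.findGreatest_spec (P := fun t => blockStart ℓ t ≤ M) (Nat.zero_le M) (Nat.zero_le M)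

lemma blockIdx_lt_of_lt_blockStart {M t : ℕ} (h : M < blockStart ℓ t) : blockIdx ℓ M < t := by
  by_contra! ht
  exact (blockStart_blockIdx_le ℓ M).not_gt (h.trans_le (blockStart_mono ℓ ht))

variable {ℓ} (hℓ : ∀ u, 0 < ℓ u)
include hℓ

lemma le_blockStart (t : ℕ) : t ≤ blockStart ℓ t := by
  simpa [blockStart] using card_nsmul_le_sum (range t) ℓ 1 fun u _ => hℓ u

lemma le_blockIdx {t M : ℕ} (h : blockStart ℓ t ≤ M) : t ≤ blockIdx ℓ M :=
  Nat.le_findGreatest ((le_blockStart hℓ t).trans h) h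

lemma lt_blockStart_blockIdx_succ (M : ℕ) : M < blockStart ℓ (blockIdx ℓ M + 1) := by
  by_contra! h
  have := le_blockIdx hℓ h
  omega

lemma sub_blockStart_blockIdx_lt (M : ℕ) :
    M - blockStart ℓ (blockIdx ℓ M) < ℓ (blockIdx ℓ M) := by
  have hle := blockStart_blockIdx_le ℓ M
  have hlt := lt_blockStart_blockIdx_succ hℓ M
  rw [blockStart_succ] at hlt
  omega

lemma blockIdx_blockStart_add {t q : ℕ} (hq : q < ℓ t) :
    blockIdx ℓ (blockStart ℓ t + q) = t := by
  have hlt := lt_blockStart_blockIdx_succ hℓ (blockStart ℓ t + q)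
  have hle := blockStart_blockIdx_le ℓ (blockStart ℓ t + q)
  have hge := le_blockIdx hℓ (Nat.le_add_right (blockStart ℓ t) q)
  by_contra hne
  have := blockStart_mono ℓ (show t + 1 ≤ blockIdx ℓ (blockStart ℓ t + q) by omega)
  rw [blockStart_succ] at this
  omega

lemma tendsto_blockIdx : Tendsto (blockIdx ℓ) atTop atTop :=
  tendsto_atTop_atTop.2 fun t => ⟨blockStart ℓ t, fun _ => le_blockIdx hℓ⟩

lemma blockSum_comp_blockIdx {β : Type*} [AddCommMonoid β] (G : ℕ → β) (u : ℕ) :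
    blockSum ℓ (fun q => G (blockIdx ℓ q)) u = ℓ u • G u := by
  calc blockSum ℓ (fun q => G (blockIdx ℓ q)) u = ∑ _q ∈ range (ℓ u), G u :=
        sum_congr rfl fun q hq => congrArg G (blockIdx_blockStart_add hℓ (mem_range.1 hq))
    _ = ℓ u • G u := by rw [sum_const, card_range]

lemma sum_range_blockStart_comp_blockIdx {β : Type*} [AddCommMonoid β] (G : ℕ → β) (t : ℕ) :
    ∑ q ∈ range (blockStart ℓ t), G (blockIdx ℓ q) = ∑ u ∈ range t, ℓ u • G u := by
  rw [sum_range_blockStart]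
  exact sum_congr rfl fun u _ => blockSum_comp_blockIdx hℓ G u

end Blocks

section Averages

variable {ℓ : ℕ → ℕ} (hℓ : ∀ u, 0 < ℓ u)
include hℓ

lemma abs_sum_range_sub_sum_range_blockStart_le (δ : ℕ → ℝ) (n : ℕ) :
    |∑ M ∈ range n, δ M - ∑ M ∈ range (blockStart ℓ (blockIdx ℓ n)), δ M|
      ≤ blockSum ℓ (fun M => |δ M|) (blockIdx ℓ n) := by
  set t := blockIdx ℓ n
  have hlt : n < blockStart ℓ t + ℓ t := blockStart_succ ℓ t ▸ lt_blockStart_blockIdx_succ hℓ n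
  rw [← sum_range_add_sum_Ico _ (blockStart_blockIdx_le ℓ n), add_sub_cancel_left]
  calc |∑ M ∈ Ico (blockStart ℓ t) n, δ M| ≤ ∑ M ∈ Ico (blockStart ℓ t) n, |δ M| :=
        abs_sum_le_sum_abs _ _
    _ ≤ ∑ M ∈ Ico (blockStart ℓ t) (blockStart ℓ t + ℓ t), |δ M| :=
        sum_le_sum_of_subset_of_nonneg (Ico_subset_Ico le_rfl hlt.le)
          fun _ _ _ => abs_nonneg _
    _ = blockSum ℓ (fun M => |δ M|) t := by
        rw [sum_Ico_eq_sum_range, add_tsub_cancel_left, blockSum]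

lemma isLittleO_sum_range_of_blockSum {δ e : ℕ → ℝ} {K : ℝ} (he : ∀ M, 0 ≤ e M)
    (hδ : ∀ M, |δ M| ≤ K * e M) (hblock : blockSum ℓ δ =o[atTop] blockSum ℓ e)
    (hsmall : blockSum ℓ e =o[atTop] fun t => ∑ u ∈ range t, blockSum ℓ e u)
    (hdiv : Tendsto (fun t => ∑ u ∈ range t, blockSum ℓ e u) atTop atTop) :
    (fun n => ∑ M ∈ range n, δ M) =o[atTop] fun n => ∑ M ∈ range n, e M := by
  have hblockSum_nonneg : ∀ u, 0 ≤ blockSum ℓ e u := fun u => sum_nonneg fun _ _ => he _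
  have hstarts : (fun t => ∑ M ∈ range (blockStart ℓ t), δ M) =o[atTop]
      fun t => ∑ M ∈ range (blockStart ℓ t), e M := by
    simpa only [sum_range_blockStart] using hblock.sum_range hblockSum_nonneg hdiv
  have htail : blockSum ℓ (fun M => |δ M|) =o[atTop]
      fun t => ∑ M ∈ range (blockStart ℓ t), e M := by
    refine IsBigO.trans_isLittleO (IsBigO.of_bound K (Eventually.of_forall fun u => ?_))
      (by simpa only [sum_range_blockStart] using hsmall)
    rw [Real.norm_of_nonneg (hblockSum_nonneg u), blockSum, blockSum,
      Real.norm_of_nonneg (sum_nonneg fun _ _ => abs_nonneg _), mul_sum]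
    exact sum_le_sum fun _ _ => hδ _
  have hτ := tendsto_blockIdx hℓ
  refine IsBigO.trans_isLittleO (g := fun n => |∑ M ∈ range (blockStart ℓ (blockIdx ℓ n)), δ M|
      + blockSum ℓ (fun M => |δ M|) (blockIdx ℓ n)) ?_ ?_
  · refine IsBigO.of_bound' (Eventually.of_forall fun n => ?_)
    have hpart := abs_sum_range_sub_sum_range_blockStart_le hℓ δ n
    have := abs_sub_abs_le_abs_sub (∑ M ∈ range n, δ M)
      (∑ M ∈ range (blockStart ℓ (blockIdx ℓ n)), δ M)
    rw [Real.norm_eq_abs, Real.norm_eq_abs]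
    exact le_trans (by linarith) (le_abs_self _)
  · refine ((hstarts.comp_tendsto hτ).norm_left.add (htail.comp_tendsto hτ)).trans_isBigO ?_
    refine IsBigO.of_bound' (Eventually.of_forall fun n => ?_)
    show ‖∑ M ∈ range (blockStart ℓ (blockIdx ℓ n)), e M‖ ≤ ‖∑ M ∈ range n, e M‖
    rw [Real.norm_of_nonneg (sum_nonneg fun _ _ => he _),
      Real.norm_of_nonneg (sum_nonneg fun _ _ => he _)]
    exact sum_le_sum_of_subset_of_nonneg (range_subset_range.2 (blockStart_blockIdx_le ℓ n))
      fun _ _ _ => he _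

end Averages

section Schedule

variable {w : ℕ → ℕ} (hw : ∀ N, 0 < w N)

-- Block `N` is repeated `(N + 1) * w (N + 1)` times, so that its copies together outweigh a single
-- copy of block `N + 1` by the factor `N + 1`.
def schedule (w : ℕ → ℕ) : ℕ → ℕ := blockIdx fun N => (N + 1) * w (N + 1)

include hw

lemma tendsto_schedule : Tendsto (schedule w) atTop atTop :=
  tendsto_blockIdx fun N => Nat.mul_pos N.succ_pos (hw _)

lemma schedule_mul_le_sum_range (t : ℕ) :
    schedule w t * w (schedule w t) ≤ ∑ u ∈ range t, w (schedule w u) := by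
  set R : ℕ → ℕ := fun N => (N + 1) * w (N + 1)
  have hR : ∀ N, 0 < R N := fun N => Nat.mul_pos N.succ_pos (hw _)
  rcases h : schedule w t with _ | n
  · simp
  have hle : blockStart R (n + 1) ≤ t := h ▸ blockStart_blockIdx_le R t
  calc (n + 1) * w (n + 1) = R n := rfl
    _ ≤ R n * w n := Nat.le_mul_of_pos_right _ (hw n)
    _ = blockSum R (fun u => w (blockIdx R u)) n := (blockSum_comp_blockIdx hR w n).symm
    _ ≤ ∑ u ∈ range (n + 1), blockSum R (fun u => w (blockIdx R u)) u :=
        single_le_sum (fun _ _ => Nat.zero_le _) (self_mem_range_succ n)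
    _ = ∑ u ∈ range (blockStart R (n + 1)), w (schedule w u) :=
        (sum_range_blockStart R _ _).symm
    _ ≤ ∑ u ∈ range t, w (schedule w u) := sum_le_sum_of_subset (range_subset_range.2 hle)

lemma isLittleO_schedule :
    (fun t => (w (schedule w t) : ℝ)) =o[atTop] fun t => ∑ u ∈ range t, (w (schedule w u) : ℝ) := by
  refine isLittleO_iff.2 fun c hc => ?_
  filter_upwards [(tendsto_schedule hw).eventually_ge_atTop ⌈c⁻¹⌉₊] with t ht
  have hsum : (schedule w t : ℝ) * w (schedule w t) ≤ ∑ u ∈ range t, (w (schedule w u) : ℝ) := by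
    exact_mod_cast schedule_mul_le_sum_range hw t
  have hinv : c⁻¹ ≤ schedule w t := Nat.ceil_le.1 ht
  rw [Real.norm_of_nonneg (Nat.cast_nonneg _),
    Real.norm_of_nonneg (sum_nonneg fun _ _ => Nat.cast_nonneg _)]
  calc (w (schedule w t) : ℝ) = c * (c⁻¹ * w (schedule w t)) := by field_simp
    _ ≤ c * (schedule w t * w (schedule w t)) := by gcongr
    _ ≤ c * ∑ u ∈ range t, (w (schedule w u) : ℝ) := by gcongr

end Schedule

lemma tendsto_div_iff_isLittleO_sub {α : Type*} {l : Filter α} {p q : α → ℝ} {I : ℝ}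
    (hq : ∀ᶠ n in l, q n ≠ 0) :
    Tendsto (fun n => p n / q n) l (𝓝 I) ↔ (fun n => p n - I * q n) =o[l] q := by
  rw [isLittleO_iff_tendsto' (hq.mono fun n hn h0 => absurd h0 hn), ← tendsto_sub_nhds_zero_iff]
  refine tendsto_congr' (hq.mono fun n hn => ?_)
  field_simp

noncomputable section OrbitSets

variable (k : ℕ → ℕ) (d : ℕ → ℕ → ℕ) (a : ℕ → ℕ → ℝ)

def totalPeriod (N : ℕ) : ℕ := ∑ j ∈ range (k N), d N j

def weightedPeriod (N : ℕ) : ℝ := ∑ j ∈ range (k N), a N j * d N j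

-- Rounding up adds at most one copy of each orbit, i.e. at most `totalPeriod N`, to the mass
-- `roundingScale N * weightedPeriod N = (N + 1) * totalPeriod N`.
def roundingScale (N : ℕ) : ℝ := (N + 1) * totalPeriod k d N / weightedPeriod k d a N

def roundedWeight (N j : ℕ) : ℕ := ⌊roundingScale k d a N * a N j⌋₊ + 1

def roundedPeriod (N : ℕ) : ℕ := ∑ j ∈ range (k N), roundedWeight k d a N j * d N j

def orbitBlockLength (u : ℕ) : ℕ :=
  blockStart (roundedWeight k d a (schedule (roundedPeriod k d a) u))
    (k (schedule (roundedPeriod k d a) u))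

-- The `M`-th orbit `(N, j)` in the concatenation over `u` of the rounded orbit sets
-- `N = schedule _ u`, where orbit `j` of set `N` is listed `roundedWeight N j` times in a row.
def orbitSeq (M : ℕ) : ℕ × ℕ :=
  let u := blockIdx (orbitBlockLength k d a) M
  let N := schedule (roundedPeriod k d a) u
  (N, blockIdx (roundedWeight k d a N) (M - blockStart (orbitBlockLength k d a) u))

variable {k d a}

lemma roundingScale_mul_le_roundedWeight (N j : ℕ) :
    roundingScale k d a N * a N j ≤ roundedWeight k d a N j := by
  rw [roundedWeight]
  push_cast
  exact (Nat.lt_floor_add_one _).le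

variable (hk : ∀ N, 1 ≤ k N)
include hk

lemma orbitBlockLength_pos (u : ℕ) : 0 < orbitBlockLength k d a u :=
  (hk _).trans (le_blockStart (fun _ => Nat.succ_pos _) _)

lemma orbitSeq_snd_lt (M : ℕ) : (orbitSeq k d a M).2 < k (orbitSeq k d a M).1 :=
  blockIdx_lt_of_lt_blockStart _ (sub_blockStart_blockIdx_lt (orbitBlockLength_pos hk) M)

lemma blockSum_orbitSeq {β : Type*} [AddCommMonoid β] (F : ℕ → ℕ → β) (u : ℕ) :
    blockSum (orbitBlockLength k d a) (fun M => F (orbitSeq k d a M).1 (orbitSeq k d a M).2) u =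
      ∑ j ∈ range (k (schedule (roundedPeriod k d a) u)),
        roundedWeight k d a (schedule (roundedPeriod k d a) u) j •
          F (schedule (roundedPeriod k d a) u) j := by
  set N := schedule (roundedPeriod k d a) u
  have hσ : ∀ q < orbitBlockLength k d a u,
      orbitSeq k d a (blockStart (orbitBlockLength k d a) u + q) =
        (N, blockIdx (roundedWeight k d a N) q) := by
    intro q hq
    simp only [orbitSeq, blockIdx_blockStart_add (orbitBlockLength_pos hk) hq,
      Nat.add_sub_cancel_left, N]
  refine (sum_congr rfl fun q hq => ?_).trans
    (sum_range_blockStart_comp_blockIdx (ℓ := roundedWeight k d a N) (fun _ => Nat.succ_pos _)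
      (F N) (k N))
  exact congrArg (fun p => F p.1 p.2) (hσ q (mem_range.1 hq))

variable (hd : ∀ N j, j < k N → 1 ≤ d N j)
include hd

lemma roundedPeriod_pos (N : ℕ) : 0 < roundedPeriod k d a N :=
  sum_pos (fun j hj => Nat.mul_pos (Nat.succ_pos _) (hd N j (mem_range.1 hj)))
    ⟨0, mem_range.2 (hk N)⟩

variable (ha : ∀ N j, j < k N → 0 < a N j)
include ha

lemma weightedPeriod_pos (N : ℕ) : 0 < weightedPeriod k d a N :=
  sum_pos (fun j hj => mul_pos (ha N j (mem_range.1 hj))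
    (Nat.cast_pos.2 (hd N j (mem_range.1 hj)))) ⟨0, mem_range.2 (hk N)⟩

lemma roundingScale_mul_weightedPeriod (N : ℕ) :
    roundingScale k d a N * weightedPeriod k d a N = (N + 1) * totalPeriod k d N :=
  div_mul_cancel₀ _ (weightedPeriod_pos hk hd ha N).ne'

lemma roundingScale_mul_nonneg (N j : ℕ) (hj : j < k N) : 0 ≤ roundingScale k d a N * a N j :=
  mul_nonneg (div_nonneg (by positivity) (weightedPeriod_pos hk hd ha N).le) (ha N j hj).le

lemma abs_roundedWeight_sub_le (N j : ℕ) (hj : j < k N) :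
    |(roundedWeight k d a N j : ℝ) - roundingScale k d a N * a N j| ≤ 1 := by
  have hfloor := Nat.floor_le (roundingScale_mul_nonneg hk hd ha N j hj)
  rw [abs_le, roundedWeight]
  push_cast
  constructor <;> linarith [Nat.lt_floor_add_one (roundingScale k d a N * a N j)]

lemma totalPeriod_le_roundedPeriod (N : ℕ) :
    ((N : ℝ) + 1) * totalPeriod k d N ≤ roundedPeriod k d a N := by
  rw [← roundingScale_mul_weightedPeriod hk hd ha, weightedPeriod, roundedPeriod, mul_sum]
  push_cast
  exact sum_le_sum fun j _ => by
    rw [← mul_assoc]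
    exact mul_le_mul_of_nonneg_right (roundingScale_mul_le_roundedWeight N j) (Nat.cast_nonneg _)

lemma isLittleO_roundedWeight {v : ℕ → ℕ → ℝ} {K : ℝ} (hv : ∀ N j, |v N j| ≤ K * d N j)
    (h : (fun N => ∑ j ∈ range (k N), a N j * v N j) =o[atTop] weightedPeriod k d a) :
    (fun N => ∑ j ∈ range (k N), (roundedWeight k d a N j : ℝ) * v N j) =o[atTop]
      fun N => (roundedPeriod k d a N : ℝ) := by
  set c := roundingScale k d a
  have hmass : (fun N : ℕ => ((N : ℝ) + 1) * totalPeriod k d N) =O[atTop]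
      fun N : ℕ => (roundedPeriod k d a N : ℝ) := by
    refine IsBigO.of_bound' (Eventually.of_forall fun N => ?_)
    rw [Real.norm_of_nonneg (by positivity), Real.norm_of_nonneg (Nat.cast_nonneg _)]
    exact totalPeriod_le_roundedPeriod hk hd ha N
  have herr : ∀ N, ‖∑ j ∈ range (k N), (roundedWeight k d a N j : ℝ) * v N j
      - c N * ∑ j ∈ range (k N), a N j * v N j‖ ≤ ‖K * totalPeriod k d N‖ := by
    intro N
    rw [mul_sum, ← sum_sub_distrib, totalPeriod, Real.norm_eq_abs, Real.norm_eq_abs, Nat.cast_sum,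
      mul_sum]
    refine (abs_sum_le_sum_abs _ _).trans ((sum_le_sum fun j hj => ?_).trans (le_abs_self _))
    rw [← mul_assoc, ← sub_mul, abs_mul]
    exact (mul_le_mul (abs_roundedWeight_sub_le hk hd ha N j (mem_range.1 hj)) (hv N j)
      (abs_nonneg _) zero_le_one).trans (one_mul _).le
  have hK : (fun _ : ℕ => K) =o[atTop] fun N => (N : ℝ) + 1 :=
    isLittleO_const_left.2 <| Or.inr <| tendsto_norm_atTop_atTop.comp <|
      tendsto_atTop_add_const_right _ 1 tendsto_natCast_atTop_atTop
  have hrounding := (IsBigO.of_bound' (Eventually.of_forall herr)).trans_isLittleO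
    ((hK.mul_isBigO (isBigO_refl (fun N => (totalPeriod k d N : ℝ)) _)).trans_isBigO hmass)
  have hscaled := ((isBigO_refl c atTop).mul_isLittleO h).trans_isBigO
    (hmass.congr_left fun N => (roundingScale_mul_weightedPeriod hk hd ha N).symm)
  exact (hrounding.add hscaled).congr_left fun N => sub_add_cancel _ _

lemma tendsto_orbitSeq_average {s : ℕ → ℕ → ℝ} {B I : ℝ} (hs : ∀ N j, |s N j| ≤ B * d N j)
    (h : Tendsto (fun N => (∑ j ∈ range (k N), a N j * s N j) / weightedPeriod k d a N) atTop
      (𝓝 I)) :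
    Tendsto (fun n => (∑ M ∈ range n, s (orbitSeq k d a M).1 (orbitSeq k d a M).2) /
      ∑ M ∈ range n, (d (orbitSeq k d a M).1 (orbitSeq k d a M).2 : ℝ)) atTop (𝓝 I) := by
  set σ := orbitSeq k d a
  set ν := schedule (roundedPeriod k d a)
  set ℓ := orbitBlockLength k d a
  set v : ℕ → ℕ → ℝ := fun N j => s N j - I * d N j
  have hv : ∀ N j, |v N j| ≤ (B + |I|) * d N j := fun N j => by
    have := abs_sub (s N j) (I * d N j)
    rw [abs_mul, Nat.abs_cast] at this
    linarith [hs N j]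
  have hav : (fun N => ∑ j ∈ range (k N), a N j * v N j) =o[atTop] weightedPeriod k d a := by
    refine ((tendsto_div_iff_isLittleO_sub (Eventually.of_forall fun N =>
      (weightedPeriod_pos hk hd ha N).ne')).1 h).congr_left fun N => ?_
    simp only [v, weightedPeriod, mul_sub, sum_sub_distrib, mul_sum, mul_left_comm]
  have hden : ∀ᶠ n in atTop, ∑ M ∈ range n, (d (σ M).1 (σ M).2 : ℝ) ≠ 0 := by
    filter_upwards [eventually_ge_atTop 1] with n hn
    exact (sum_pos (fun M _ => Nat.cast_pos.2 (hd _ _ (orbitSeq_snd_lt hk M)))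
      (nonempty_range_iff.2 (by omega))).ne'
  have hW : blockSum ℓ (fun M => (d (σ M).1 (σ M).2 : ℝ)) =
      fun u => (roundedPeriod k d a (ν u) : ℝ) := funext fun u =>
    (blockSum_orbitSeq hk (fun N j => (d N j : ℝ)) u).trans <| by
      simp only [roundedPeriod, nsmul_eq_mul, Nat.cast_sum, Nat.cast_mul, ν]
  have hV : blockSum ℓ (fun M => v (σ M).1 (σ M).2) =
      fun u => ∑ j ∈ range (k (ν u)), (roundedWeight k d a (ν u) j : ℝ) * v (ν u) j :=
    funext fun u => (blockSum_orbitSeq hk v u).trans <| by simp only [nsmul_eq_mul, ν]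
  refine (tendsto_div_iff_isLittleO_sub hden).2 <|
    (isLittleO_sum_range_of_blockSum (ℓ := ℓ) (orbitBlockLength_pos hk) (K := B + |I|)
      (fun M => Nat.cast_nonneg _) (fun M => hv _ _) ?_ ?_ ?_).congr_left
      fun n => by simp only [v, sum_sub_distrib, mul_sum]
  · rw [hV, hW]
    exact (isLittleO_roundedWeight hk hd ha hv hav).comp_tendsto
      (tendsto_schedule (roundedPeriod_pos hk hd))
  · rw [hW]
    exact isLittleO_schedule (roundedPeriod_pos hk hd)
  · rw [hW]
    refine tendsto_atTop_mono (fun t => ?_) tendsto_natCast_atTop_atTop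
    simpa using card_nsmul_le_sum (range t) (fun u => (roundedPeriod k d a (ν u) : ℝ)) 1
      fun u _ => Nat.one_le_cast.2 (roundedPeriod_pos hk hd (ν u))

end OrbitSets

lemma norm_birkhoffSum_le {α E : Type*} [SeminormedAddCommGroup E] (f : α → α) {g : α → E}
    {B : ℝ} (hg : ∀ x, ‖g x‖ ≤ B) (n : ℕ) (x : α) : ‖birkhoffSum f g n x‖ ≤ n * B :=
  (norm_sum_le_of_le _ fun _ _ => hg _).trans_eq (by simp)

open MeasureTheory

theorem stmt_2_general {X : Type*} [TopologicalSpace X] [CompactSpace X]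
    [MeasurableSpace X]
    (φ : X → X)
    (μ : Measure X)
    (k : ℕ → ℕ) (x : ℕ → ℕ → X) (d : ℕ → ℕ → ℕ) (a : ℕ → ℕ → ℝ)
    (hk : ∀ N, 1 ≤ k N)
    (hd : ∀ N j, j < k N → 1 ≤ d N j)
    (hper : ∀ N j, j < k N → φ^[d N j] (x N j) = x N j)
    (ha : ∀ N j, j < k N → 0 < a N j)
    (hequi : ∀ f : X → ℝ, Continuous f →
      Tendsto (fun N =>
          (∑ j ∈ Finset.range (k N),
              a N j * ∑ i ∈ Finset.range (d N j), f (φ^[i] (x N j))) /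
          (∑ j ∈ Finset.range (k N), a N j * (d N j : ℝ)))
        atTop (𝓝 (∫ y, f y ∂μ))) :
    ∃ (y : ℕ → X) (e : ℕ → ℕ),
      (∀ M, 1 ≤ e M) ∧ (∀ M, φ^[e M] (y M) = y M) ∧
      ∀ f : X → ℝ, Continuous f →
        Tendsto (fun N =>
            (∑ M ∈ Finset.range N, ∑ i ∈ Finset.range (e M), f (φ^[i] (y M))) /
            (∑ M ∈ Finset.range N, (e M : ℝ)))
          atTop (𝓝 (∫ y, f y ∂μ)) := by
  set σ := orbitSeq k d a
  refine ⟨fun M => x (σ M).1 (σ M).2, fun M => d (σ M).1 (σ M).2,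
    fun M => hd _ _ (orbitSeq_snd_lt hk M), fun M => hper _ _ (orbitSeq_snd_lt hk M),
    fun f hf => ?_⟩
  obtain ⟨B, hB⟩ := isCompact_univ.exists_bound_of_continuousOn hf.continuousOn
  exact tendsto_orbitSeq_average hk hd ha (s := fun N j => birkhoffSum φ f (d N j) (x N j))
    (fun N j => (norm_birkhoffSum_le φ (fun z => hB z trivial) _ _).trans_eq (mul_comm _ _))
    (hequi f hf)

/-- From an equidistributed sequence of orbit sets (weighted finite collections of
periodic orbits) one can extract a sequence of genuine periodic orbits whose Cesàro
averages equidistribute (Corollary 1.4 of the paper). -/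
theorem stmt_2 {X : Type*} [TopologicalSpace X] [CompactSpace X]
    [TopologicalSpace.MetrizableSpace X]
    [MeasurableSpace X] [BorelSpace X]
    (φ : X → X) (hφ : Continuous φ)
    (μ : Measure X) [IsProbabilityMeasure μ]
    (k : ℕ → ℕ) (x : ℕ → ℕ → X) (d : ℕ → ℕ → ℕ) (a : ℕ → ℕ → ℝ)
    (hk : ∀ N, 1 ≤ k N)
    (hd : ∀ N j, j < k N → 1 ≤ d N j)
    (hper : ∀ N j, j < k N → φ^[d N j] (x N j) = x N j)
    (ha : ∀ N j, j < k N → 0 < a N j)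
    (hequi : ∀ f : X → ℝ, Continuous f →
      Tendsto (fun N =>
          (∑ j ∈ Finset.range (k N),
              a N j * ∑ i ∈ Finset.range (d N j), f (φ^[i] (x N j))) /
          (∑ j ∈ Finset.range (k N), a N j * (d N j : ℝ)))
        atTop (𝓝 (∫ y, f y ∂μ))) :
    ∃ (y : ℕ → X) (e : ℕ → ℕ),
      (∀ M, 1 ≤ e M) ∧ (∀ M, φ^[e M] (y M) = y M) ∧
      ∀ f : X → ℝ, Continuous f →
        Tendsto (fun N =>
            (∑ M ∈ Finset.range N, ∑ i ∈ Finset.range (e M), f (φ^[i] (y M))) /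
            (∑ M ∈ Finset.range N, (e M : ℝ)))
          atTop (𝓝 (∫ y, f y ∂μ)) :=
  stmt_2_general φ μ k x d a hk hd hper ha hequi
end

section
/- The set of matrices A in SL(2, ℝ) such that no complex root of unity is an eigenvalue of A — that is, such that for every ζ ∈ ℂ with ζ^n = 1 for some integer n ≥ 1, ζ is not a root of the characteristic polynomial of A — is a dense subset of SL(2, ℝ); indeed it is the intersection of countably many open dense subsets of SL(2, ℝ), hence comeager. -/
/-!
For `A ∈ SL(2, ℝ)` the characteristic polynomial is `ζ ^ 2 - tr A * ζ + 1`, so an `n`-th root of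
unity `ζ` is an eigenvalue of `A` only if `tr A` lies in the finite set `{ζ + ζ⁻¹ | ζ ^ n = 1}`.
Each condition "no `n`-th root of unity is an eigenvalue" is therefore open, and it remains to see
that `tr` avoids any countable set on a dense subset of `SL(2, ℝ)`. Multiplying
`A = !![a, b; c, d]` by `E t = !![1 + t ^ 3, t; t ^ 2, 1] ∈ SL(2, ℝ)` gives a curve through `A`
along which the trace is `a t ^ 3 + b t ^ 2 + c t + tr A`, a nonconstant polynomial since `A ≠ 0`;
it takes values outside a countable set for a dense set of `t`.
-/

open Polynomial

local notation "SL₂ℝ" => Subtype fun M : Matrix (Fin 2) (Fin 2) ℝ => Matrix.det M = 1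

theorem Matrix.det_sub_smul_one_fin_two {R : Type*} [CommRing R] (M : Matrix (Fin 2) (Fin 2) R)
    (ζ : R) : (M - ζ • (1 : Matrix (Fin 2) (Fin 2) R)).det = ζ ^ 2 - M.trace * ζ + M.det := by
  simp [Matrix.det_fin_two, Matrix.trace_fin_two]; ring

theorem det_map_ofReal_sub_smul_one (A : SL₂ℝ) (ζ : ℂ) :
    (A.1.map Complex.ofReal - ζ • (1 : Matrix (Fin 2) (Fin 2) ℂ)).det =
      ζ ^ 2 - A.1.trace * ζ + 1 := by
  have hdet : (A.1.map Complex.ofReal).det = 1 :=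
    (Complex.ofRealHom.map_det A.1).symm.trans (by simp [A.2])
  rw [Matrix.det_sub_smul_one_fin_two, hdet]
  simp [Matrix.trace_fin_two]

theorem Polynomial.countable_preimage_eval {R : Type*} [CommRing R] [IsDomain R] {p : R[X]}
    (hp : p.natDegree ≠ 0) {T : Set R} (hT : T.Countable) :
    ((fun x => p.eval x) ⁻¹' T).Countable := by
  have hroots : (fun x => p.eval x) ⁻¹' T = ⋃ τ ∈ T, {x | (p - C τ).IsRoot x} := by
    ext; simp [sub_eq_zero]
  rw [hroots]
  refine hT.biUnion fun τ _ => (finite_setOfPred_isRoot fun h => hp ?_).countable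
  rw [← natDegree_sub_C (a := τ), h, natDegree_zero]

def rootOfUnityTraces (n : ℕ) : Set ℝ := {x | ∃ ζ : ℂ, ζ ^ n = 1 ∧ ζ ^ 2 - x * ζ + 1 = 0}

theorem rootOfUnityTraces_finite {n : ℕ} (hn : 0 < n) : (rootOfUnityTraces n).Finite := by
  refine ((nthRootsFinset n (1 : ℂ)).finite_toSet.image fun ζ => (ζ + ζ⁻¹).re).subset ?_
  rintro x ⟨ζ, hζn, hζx⟩
  have hζ : ζ ≠ 0 := by rintro rfl; simp at hζx
  refine ⟨ζ, (mem_nthRootsFinset hn 1).2 hζn, ?_⟩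
  have : ζ + ζ⁻¹ = x := by field_simp; linear_combination hζx
  simp [this]

theorem setOf_det_ne_zero_eq_preimage_trace (n : ℕ) :
    {A : SL₂ℝ | ∀ ζ : ℂ, ζ ^ n = 1 →
        (A.1.map Complex.ofReal - ζ • (1 : Matrix (Fin 2) (Fin 2) ℂ)).det ≠ 0} =
      (fun A : SL₂ℝ => A.1.trace) ⁻¹' (rootOfUnityTraces n)ᶜ := by
  ext A
  simp [det_map_ofReal_sub_smul_one, rootOfUnityTraces]

def traceCurve (t : ℝ) : Matrix (Fin 2) (Fin 2) ℝ := !![1 + t ^ 3, t; t ^ 2, 1]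

theorem det_traceCurve (t : ℝ) : (traceCurve t).det = 1 := by
  simp [traceCurve, Matrix.det_fin_two_of]; ring

noncomputable def tracePoly (M : Matrix (Fin 2) (Fin 2) ℝ) : ℝ[X] :=
  C (M 0 0) * X ^ 3 + C (M 0 1) * X ^ 2 + C (M 1 0) * X + C M.trace

theorem trace_mul_traceCurve (M : Matrix (Fin 2) (Fin 2) ℝ) (t : ℝ) :
    (M * traceCurve t).trace = (tracePoly M).eval t := by
  simp [traceCurve, tracePoly, Matrix.trace_fin_two, Matrix.mul_apply, Fin.sum_univ_two]; ring

theorem natDegree_tracePoly_ne_zero {M : Matrix (Fin 2) (Fin 2) ℝ} (hM : M.det ≠ 0) :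
    (tracePoly M).natDegree ≠ 0 := by
  intro h
  obtain ⟨c, hc⟩ := natDegree_eq_zero.1 h
  have h3 := congrArg (coeff · 3) hc
  have h2 := congrArg (coeff · 2) hc
  have h1 := congrArg (coeff · 1) hc
  simp [tracePoly] at h1 h2 h3
  exact hM (by simp [Matrix.det_fin_two, ← h1, ← h2, ← h3])

theorem dense_setOf_trace_notMem {T : Set ℝ} (hT : T.Countable) :
    Dense {A : SL₂ℝ | A.1.trace ∉ T} := by
  intro A
  let γ : ℝ → SL₂ℝ := fun t =>
    ⟨A.1 * traceCurve t, by rw [Matrix.det_mul, A.2, det_traceCurve, one_mul]⟩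
  have hγ : Continuous γ :=
    (by unfold traceCurve; fun_prop : Continuous fun t => A.1 * traceCurve t).subtype_mk _
  have hγ0 : γ 0 = A := Subtype.ext (by simp [γ, traceCurve, ← Matrix.one_fin_two])
  have hgood : Dense ((fun t => (tracePoly A.1).eval t) ⁻¹' T)ᶜ :=
    (countable_preimage_eval (natDegree_tracePoly_ne_zero (by simp [A.2])) hT).dense_compl ℝ
  have := mem_closure_image hγ.continuousAt (hgood 0)
  rw [hγ0] at this
  refine closure_mono ?_ this
  rintro _ ⟨t, ht, rfl⟩
  simpa [γ, trace_mul_traceCurve] using ht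

/-- The set of matrices in `SL(2, ℝ)` having no complex root of unity as an eigenvalue
is dense; indeed it is the intersection of countably many open dense subsets. -/
theorem stmt_4 :
    Dense {A : {M : Matrix (Fin 2) (Fin 2) ℝ // M.det = 1} |
        ∀ ζ : ℂ, (∃ n : ℕ, 1 ≤ n ∧ ζ ^ n = 1) →
          (A.1.map Complex.ofReal - ζ • (1 : Matrix (Fin 2) (Fin 2) ℂ)).det ≠ 0} ∧
    ∃ U : ℕ → Set {M : Matrix (Fin 2) (Fin 2) ℝ // M.det = 1},
      (∀ n, IsOpen (U n)) ∧ (∀ n, Dense (U n)) ∧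
      {A : {M : Matrix (Fin 2) (Fin 2) ℝ // M.det = 1} |
          ∀ ζ : ℂ, (∃ n : ℕ, 1 ≤ n ∧ ζ ^ n = 1) →
            (A.1.map Complex.ofReal - ζ • (1 : Matrix (Fin 2) (Fin 2) ℂ)).det ≠ 0} =
        ⋂ n, U n := by
  let U : ℕ → Set SL₂ℝ := fun n => {A | ∀ ζ : ℂ, ζ ^ (n + 1) = 1 →
    (A.1.map Complex.ofReal - ζ • (1 : Matrix (Fin 2) (Fin 2) ℂ)).det ≠ 0}
  have hU n : U n = (fun A : SL₂ℝ => A.1.trace) ⁻¹' (rootOfUnityTraces (n + 1))ᶜ :=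
    setOf_det_ne_zero_eq_preimage_trace (n + 1)
  have hfinite n : (rootOfUnityTraces (n + 1)).Finite := rootOfUnityTraces_finite n.succ_pos
  have hopen n : IsOpen (U n) :=
    hU n ▸ (hfinite n).isClosed.isOpen_compl.preimage continuous_subtype_val.matrix_trace
  have hdense n : Dense (U n) := hU n ▸ dense_setOf_trace_notMem (hfinite n).countable
  have hinter :
      ⋂ n, U n = (fun A : SL₂ℝ => A.1.trace) ⁻¹' (⋃ n, rootOfUnityTraces (n + 1))ᶜ := by
    simp only [hU, Set.compl_iUnion, Set.preimage_iInter]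
  have hS : {A : SL₂ℝ | ∀ ζ : ℂ, (∃ n : ℕ, 1 ≤ n ∧ ζ ^ n = 1) →
      (A.1.map Complex.ofReal - ζ • (1 : Matrix (Fin 2) (Fin 2) ℂ)).det ≠ 0} = ⋂ n, U n := by
    ext A
    simp only [Set.mem_iInter, Set.mem_ofPred_eq, U]
    exact ⟨fun h n ζ hζ => h ζ ⟨n + 1, n.succ_pos, hζ⟩,
      fun h ζ ⟨n, hn, hζ⟩ => h (n - 1) ζ (by rwa [Nat.sub_add_cancel hn])⟩
  refine ⟨?_, U, hopen, hdense, hS⟩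
  rw [hS, hinter]
  exact dense_setOf_trace_notMem (Set.countable_iUnion fun n => (hfinite n).countable)
end
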